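/- Let P⊥ be an orthogonal projection matrix on ℝ^d, let b ∈ ℝ^d satisfy P⊥ b = b, let α ≠ 0 and σ > 0 be reals, and let μ be a probability measure on ℝ^d with ∫‖z‖ dμ(z) < ∞ such that P⊥ z = b for μ-almost every z. Define p(x) = ∫ φ_{σ²}(x − αz) dμ(z), where φ_{σ²} is the density of N(0, σ²I_d). Then p is positive and differentiable, and for all x ∈ ℝ^d, P⊥ · ∇ log p(x) = (α b − P⊥ x)/σ². -/

import Mathlib

open MeasureTheory Matrix

/-- Identify Euclidean space with the plain function type `ℝ^d`. -/
noncomputable def ofEuc {n : ℕ} (v : EuclideanSpace ℝ (Fin n)) : Fin n → ℝ :=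
  WithLp.equiv 2 (Fin n → ℝ) v

/-- The density of the Gaussian distribution `N(0, t I_d)` on `ℝ^d`. -/
noncomputable def gaussDensity (d : ℕ) (t : ℝ) (u : EuclideanSpace ℝ (Fin d)) : ℝ :=
  (2 * Real.pi * t) ^ (-(d : ℝ) / 2) * Real.exp (-‖u‖ ^ 2 / (2 * t))

/-! Differentiating under the integral sign (the Gaussian density and its gradient are bounded and
continuous, `μ` is finite) gives `∇p(x) = -σ⁻² ∫ φ(x - αz) (x - αz) dμ(z)`. Because `P⊥ z = b` for
`μ`-a.e. `z`, applying `P⊥` turns the vector `x - αz` into the constant `P⊥ x - α b`, which leaves the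
integral, so `P⊥ ∇p(x) = -σ⁻² p(x) (P⊥ x - α b)`; dividing by `p(x) > 0` gives the score. -/

open InnerProductSpace

section Gaussian

variable {d : ℕ} {t : ℝ}

lemma gaussDensity_pos (ht : 0 < t) (u : EuclideanSpace ℝ (Fin d)) : 0 < gaussDensity d t u := by
  unfold gaussDensity
  positivity

lemma continuous_gaussDensity : Continuous (gaussDensity d t) := by
  unfold gaussDensity
  fun_prop

lemma gaussDensity_le (ht : 0 < t) (u : EuclideanSpace ℝ (Fin d)) :
    gaussDensity d t u ≤ (2 * Real.pi * t) ^ (-(d : ℝ) / 2) := by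
  unfold gaussDensity
  refine mul_le_of_le_one_right (by positivity) (Real.exp_le_one_iff.2 ?_)
  have := sq_nonneg ‖u‖
  exact div_nonpos_of_nonpos_of_nonneg (by linarith) (by linarith)

lemma mul_exp_neg_sq_div_le (ht : 0 < t) (s : ℝ) :
    s * Real.exp (-s ^ 2 / (2 * t)) ≤ 1 + t / 2 := by
  rw [neg_div, Real.exp_neg, ← div_eq_mul_inv, div_le_iff₀ (Real.exp_pos _)]
  have hexp := Real.add_one_le_exp (s ^ 2 / (2 * t))
  have hamgm : s ≤ s ^ 2 / (2 * t) + t / 2 := by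
    rw [div_add' _ _ _ (by positivity), le_div_iff₀ (by positivity)]
    nlinarith [sq_nonneg (s - t)]
  nlinarith [div_nonneg (sq_nonneg s) (by positivity : (0 : ℝ) ≤ 2 * t)]

lemma hasGradientAt_gaussDensity (ht : 0 < t) (u : EuclideanSpace ℝ (Fin d)) :
    HasGradientAt (gaussDensity d t) ((-t⁻¹ * gaussDensity d t u) • u) u := by
  have hφ : gaussDensity d t =
      fun v => (2 * Real.pi * t) ^ (-(d : ℝ) / 2) * Real.exp (-(2 * t)⁻¹ * ‖v‖ ^ 2) := by
    funext v
    rw [gaussDensity]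
    ring_nf
  rw [hasGradientAt_iff_hasFDerivAt, hφ]
  refine (((hasStrictFDerivAt_norm_sq u).hasFDerivAt.const_mul (-(2 * t)⁻¹)).exp.const_mul
    _).congr_fderiv ?_
  ext v
  simp
  field_simp

lemma exists_norm_gaussDensity_gradient_le (ht : 0 < t) :
    ∃ C, ∀ u : EuclideanSpace ℝ (Fin d), ‖(-t⁻¹ * gaussDensity d t u) • u‖ ≤ C := by
  refine ⟨t⁻¹ * (2 * Real.pi * t) ^ (-(d : ℝ) / 2) * (1 + t / 2), fun u => ?_⟩
  rw [norm_smul, norm_mul, norm_neg, Real.norm_of_nonneg (inv_pos.2 ht).le,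
    Real.norm_of_nonneg (gaussDensity_pos ht u).le, mul_assoc, mul_assoc]
  gcongr ?_ * ?_
  unfold gaussDensity
  rw [mul_assoc]
  refine mul_le_mul_of_nonneg_left ?_ (by positivity)
  rw [mul_comm]
  exact mul_exp_neg_sq_div_le ht ‖u‖

end Gaussian

section Smoothing

variable {E : Type*} [NormedAddCommGroup E] [InnerProductSpace ℝ E]
  [MeasurableSpace E] [OpensMeasurableSpace E] [SecondCountableTopology E]
  {μ : Measure E} [IsFiniteMeasure μ]

lemma integrable_comp_sub_smul {F : Type*} [NormedAddCommGroup F] {g : E → F}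
    (hg : Continuous g) (hg_bdd : ∃ C, ∀ u, ‖g u‖ ≤ C) (α : ℝ) (x : E) :
    Integrable (fun z => g (x - α • z)) μ := by
  obtain ⟨C, hC⟩ := hg_bdd
  exact .of_bound (hg.comp (by fun_prop)).aestronglyMeasurable C (.of_forall fun z => hC _)

theorem hasGradientAt_integral_comp_sub_smul [CompleteSpace E] {f : E → ℝ} {f' : E → E}
    (hf : ∀ u, HasGradientAt f (f' u) u) (hf' : Continuous f')
    (hf_bdd : ∃ C, ∀ u, ‖f u‖ ≤ C) (hf'_bdd : ∃ C, ∀ u, ‖f' u‖ ≤ C) (α : ℝ) (x : E) :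
    HasGradientAt (fun x => ∫ z, f (x - α • z) ∂μ) (∫ z, f' (x - α • z) ∂μ) x := by
  have hf_cont : Continuous f :=
    continuous_iff_continuousAt.2 fun u => (hf u).differentiableAt.continuousAt
  obtain ⟨C', hC'⟩ := hf'_bdd
  rw [hasGradientAt_iff_hasFDerivAt]
  refine (hasFDerivAt_integral_of_dominated_of_fderiv_le (bound := fun _ => C')
    (F' := fun x z => toDual ℝ E (f' (x - α • z))) Filter.univ_mem
    (.of_forall fun x => (integrable_comp_sub_smul hf_cont hf_bdd α x).aestronglyMeasurable)
    (integrable_comp_sub_smul hf_cont hf_bdd α x)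
    ((toDual ℝ E).continuous.comp (hf'.comp (by fun_prop))).aestronglyMeasurable
    (.of_forall fun z x _ => by simpa using hC' _) (integrable_const C')
    (.of_forall fun z x _ => ?_)).congr_fderiv ?_
  · exact (hf _).hasFDerivAt.comp x ((hasFDerivAt_id x).sub_const _)
  · exact (toDual ℝ E).toLinearIsometry.integral_comp_comm _

end Smoothing

theorem HasGradientAt.log {E : Type*} [NormedAddCommGroup E] [InnerProductSpace ℝ E]
    [CompleteSpace E] {f : E → ℝ} {f' x : E} (hf : HasGradientAt f f' x) (hx : f x ≠ 0) :
    HasGradientAt (fun y => Real.log (f y)) ((f x)⁻¹ • f') x := by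
  rw [hasGradientAt_iff_hasFDerivAt] at hf ⊢
  simpa using hf.log hx

lemma integral_pos_of_forall_pos {α : Type*} [MeasurableSpace α] {μ : Measure α} [NeZero μ]
    {f : α → ℝ} (hf : ∀ x, 0 < f x) (hfi : Integrable f μ) : 0 < ∫ x, f x ∂μ := by
  rw [integral_pos_iff_support_of_nonneg (fun x => (hf x).le) hfi,
    Function.support_eq_univ fun x => (hf x).ne']
  exact pos_iff_ne_zero.2 (by simpa using NeZero.ne μ)

lemma map_integral_smul_sub_smul {E F : Type*} [NormedAddCommGroup E] [NormedSpace ℝ E]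
    [NormedAddCommGroup F] [NormedSpace ℝ F] [CompleteSpace E] [CompleteSpace F]
    [MeasurableSpace E] {μ : Measure E} (T : E →L[ℝ] F) {b : F} (hT : ∀ᵐ z ∂μ, T z = b)
    {w : E → ℝ} {α : ℝ} {x : E} (hw : Integrable (fun z => w z • (x - α • z)) μ) :
    T (∫ z, w z • (x - α • z) ∂μ) = (∫ z, w z ∂μ) • (T x - α • b) := by
  rw [← T.integral_comp_comm hw, ← integral_smul_const]
  exact integral_congr_ae (hT.mono fun z hz => by simp [hz])

theorem stmt3_general (d : ℕ) (Pperp : Matrix (Fin d) (Fin d) ℝ)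
    (b : Fin d → ℝ)
    (α σ : ℝ) (hσ : 0 < σ)
    (μ : Measure (EuclideanSpace ℝ (Fin d))) [IsProbabilityMeasure μ]
    (hsupp : ∀ᵐ z ∂μ, Pperp.mulVec (ofEuc z) = b)
    (p : EuclideanSpace ℝ (Fin d) → ℝ)
    (hp : p = fun x => ∫ z, gaussDensity d (σ ^ 2) (x - α • z) ∂μ) :
    (∀ x, 0 < p x) ∧ Differentiable ℝ p ∧
      ∀ x, Pperp.mulVec (ofEuc (gradient (fun y => Real.log (p y)) x))
        = (σ ^ 2)⁻¹ • (α • b - Pperp.mulVec (ofEuc x)) := by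
  have ht : 0 < σ ^ 2 := by positivity
  have hφ_bdd : ∃ C, ∀ u, ‖gaussDensity d (σ ^ 2) u‖ ≤ C := ⟨_, fun u => by
    rw [Real.norm_of_nonneg (gaussDensity_pos ht u).le]; exact gaussDensity_le ht u⟩
  have hpos : ∀ x, 0 < p x := fun x => hp ▸ integral_pos_of_forall_pos
    (fun z => gaussDensity_pos ht _) (integrable_comp_sub_smul continuous_gaussDensity hφ_bdd α x)
  have hφ'_cont : Continuous fun u => (-(σ ^ 2)⁻¹ * gaussDensity d (σ ^ 2) u) • u :=
    (continuous_const.mul continuous_gaussDensity).smul continuous_id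
  have hgrad : ∀ x, HasGradientAt p
      (∫ z, (-(σ ^ 2)⁻¹ * gaussDensity d (σ ^ 2) (x - α • z)) • (x - α • z) ∂μ) x := fun x =>
    hp ▸ hasGradientAt_integral_comp_sub_smul (hasGradientAt_gaussDensity ht) hφ'_cont hφ_bdd
      (exists_norm_gaussDensity_gradient_le ht) α x
  refine ⟨hpos, fun x => (hgrad x).differentiableAt, fun x => ?_⟩
  let T : EuclideanSpace ℝ (Fin d) →L[ℝ] (Fin d → ℝ) := LinearMap.toContinuousLinearMap
    (Pperp.mulVecLin ∘ₗ (WithLp.linearEquiv 2 ℝ (Fin d → ℝ)).toLinearMap)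
  change T _ = (σ ^ 2)⁻¹ • (α • b - T x)
  rw [((hgrad x).log (hpos x).ne').gradient, map_smul, map_integral_smul_sub_smul T hsupp
    (integrable_comp_sub_smul hφ'_cont (exists_norm_gaussDensity_gradient_le ht) α x),
    integral_const_mul, ← congrFun hp x, smul_smul, inv_mul_eq_div,
    mul_div_cancel_right₀ _ (hpos x).ne', neg_smul, ← smul_neg, neg_sub]

/-- VP normal score: if `P⊥` is an orthogonal projection matrix,
`P⊥ b = b`, `α ≠ 0`, `σ > 0`, and `μ` is a probability measure with finite first
moment supported on `{z : P⊥ z = b}`, then `p(x) = ∫ φ_{σ²}(x − αz) dμ(z)` is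
positive and differentiable and `P⊥ ∇ log p(x) = (α b − P⊥ x)/σ²`. -/
theorem stmt3 (d : ℕ) (Pperp : Matrix (Fin d) (Fin d) ℝ)
    (hproj : Pperp * Pperp = Pperp) (hsymm : Pperpᵀ = Pperp)
    (b : Fin d → ℝ) (hb : Pperp.mulVec b = b)
    (α σ : ℝ) (hα : α ≠ 0) (hσ : 0 < σ)
    (μ : Measure (EuclideanSpace ℝ (Fin d))) [IsProbabilityMeasure μ]
    (hmom : Integrable (fun z => ‖z‖) μ)
    (hsupp : ∀ᵐ z ∂μ, Pperp.mulVec (ofEuc z) = b)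
    (p : EuclideanSpace ℝ (Fin d) → ℝ)
    (hp : p = fun x => ∫ z, gaussDensity d (σ ^ 2) (x - α • z) ∂μ) :
    (∀ x, 0 < p x) ∧ Differentiable ℝ p ∧
      ∀ x, Pperp.mulVec (ofEuc (gradient (fun y => Real.log (p y)) x))
        = (σ ^ 2)⁻¹ • (α • b - Pperp.mulVec (ofEuc x)) :=
  stmt3_general d Pperp b α σ hσ μ hsupp p hp
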